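/- Let V̄ ∈ P_c(ℝⁿ) be fixed and consider the constant PVF V[μ] = μ ⊗ V̄. Then the solution of the Cauchy problem μ̇ = V[μ], μ(0) = μ₀, obtained as the limit of lattice approximate solutions, is the constant-speed translation of μ₀ at velocity v̄ = ∫ v dV̄: for every Borel set A, μ(t)(A) = μ₀(A − t v̄). In particular, a measure-independent PVF cannot produce diffusion. -/

import Mathlib

open MeasureTheory Metric Set Filter
open scoped NNReal ENNReal Topology

noncomputable section

/-- Euclidean space ℝⁿ. -/
abbrev Euc (n : ℕ) := EuclideanSpace ℝ (Fin n)

namespace MDE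

variable {X : Type*} [NormedAddCommGroup X] [InnerProductSpace ℝ X] [CompleteSpace X]
  [MeasurableSpace X] [BorelSpace X]

/-- `τ` is a transference plan (coupling) between `μ` and `ν`. -/
def IsCoupling {Y Z : Type*} [MeasurableSpace Y] [MeasurableSpace Z]
    (τ : Measure (Y × Z)) (μ : Measure Y) (ν : Measure Z) : Prop :=
  τ.map Prod.fst = μ ∧ τ.map Prod.snd = ν

/-- The 1-Wasserstein distance. -/
def Wass {Y : Type*} [MeasurableSpace Y] [PseudoMetricSpace Y]
    (μ ν : Measure Y) : ℝ :=
  sInf { r | ∃ τ : Measure (Y × Y), IsCoupling τ μ ν ∧ r = ∫ p, dist p.1 p.2 ∂τ }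

/-- `τ` is an optimal transference plan between `μ` and `ν` for the 1-Wasserstein cost. -/
def IsOptPlan {Y : Type*} [MeasurableSpace Y] [PseudoMetricSpace Y]
    (τ : Measure (Y × Y)) (μ ν : Measure Y) : Prop :=
  IsCoupling τ μ ν ∧ (∫ p, dist p.1 p.2 ∂τ) = Wass μ ν

/-- The support of `μ` is contained in `s`. -/
def SuppIn {Y : Type*} [MeasurableSpace Y] (μ : Measure Y) (s : Set Y) : Prop :=
  μ sᶜ = 0

/-- Compactly supported probability measure. -/
def Pc (μ : Measure X) : Prop :=
  IsProbabilityMeasure μ ∧ ∃ R : ℝ, 0 ≤ R ∧ SuppIn μ (closedBall 0 R)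

/-- A probability vector field: assigns to a measure on the base a measure on the tangent
bundle `X × X`. -/
abbrev PVF (X : Type*) [MeasurableSpace X] := Measure X → Measure (X × X)

/-- The defining property of a PVF: the first marginal of `V[μ]` is `μ`. -/
def IsPVF (V : PVF X) : Prop := ∀ μ : Measure X, Pc μ → (V μ).map Prod.fst = μ

/-- (H1): support sublinearity of the fiber velocities. -/
def H1 (V : PVF X) (C : ℝ) : Prop :=
  ∀ μ : Measure X, Pc μ → ∀ R : ℝ, 0 ≤ R → SuppIn μ (closedBall 0 R) →
    SuppIn (V μ) {p : X × X | ‖p.2‖ ≤ C * (1 + R)}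

/-- The quantity `𝒲`: Wasserstein distance of the fiber components over transference
plans that are optimal on the base. -/
def calW {Y : Type*} [MeasurableSpace Y] [PseudoMetricSpace Y]
    (W₁ W₂ : Measure (Y × Y)) : ℝ :=
  sInf { r | ∃ T : Measure ((Y × Y) × (Y × Y)), IsCoupling T W₁ W₂ ∧
    IsOptPlan (T.map (fun p => (p.1.1, p.2.1))) (W₁.map Prod.fst) (W₂.map Prod.fst) ∧
    r = ∫ p, dist p.1.2 p.2.2 ∂T }

/-- (H2): continuity of `V` for the Wasserstein metrics. -/
def H2 (V : PVF X) : Prop :=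
  ∀ μ : Measure X, Pc μ → ∀ ε > (0:ℝ), ∃ δ > (0:ℝ), ∀ ν : Measure X, Pc ν →
    Wass μ ν < δ → Wass (V μ) (V ν) < ε

/-- (H3): Lipschitz-type condition on `V` in terms of `𝒲`. -/
def H3 (V : PVF X) : Prop :=
  ∀ R > (0:ℝ), ∃ K > (0:ℝ), ∀ μ ν : Measure X, Pc μ → Pc ν →
    SuppIn μ (closedBall 0 R) → SuppIn ν (closedBall 0 R) →
    calW (V μ) (V ν) ≤ K * Wass μ ν

/-- Weak solution of the MDE `μ̇ = V[μ]` on `[0,T]` (integral formulation). -/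
def IsWeakSol (V : PVF X) (T : ℝ) (μ : ℝ → Measure X) : Prop :=
  ∀ f : X → ℝ, ContDiff ℝ (⊤ : ℕ∞) f → HasCompactSupport f →
    IntegrableOn (fun s => ∫ p : X × X, (inner ℝ (gradient f p.1) p.2 : ℝ) ∂(V (μ s)))
      (Icc 0 T) volume ∧
    ∀ t ∈ Icc (0:ℝ) T, ∫ x, f x ∂(μ t) =
      ∫ x, f x ∂(μ 0) + ∫ s in Icc 0 t, ∫ p : X × X, (inner ℝ (gradient f p.1) p.2 : ℝ) ∂(V (μ s))

/-- Finite convex combination of Dirac deltas. -/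
def IsDiracComb (μ : Measure X) : Prop :=
  ∃ (k : ℕ) (m : Fin k → ℝ≥0) (x : Fin k → X),
    (∀ i, 0 < m i) ∧ (∑ i, m i) = 1 ∧ μ = ∑ i, (m i : ℝ≥0∞) • Measure.dirac (x i)

/-- Lipschitz semigroup of solutions of `μ̇ = V[μ]` on `[0,T]` (Definition 4.3). -/
def IsLipschitzSemigroup (V : PVF X) (T : ℝ) (S : ℝ → Measure X → Measure X) : Prop :=
  (∀ μ : Measure X, Pc μ → ∀ t ∈ Icc (0:ℝ) T, Pc (S t μ)) ∧
  (∀ μ : Measure X, Pc μ → S 0 μ = μ) ∧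
  (∀ μ : Measure X, Pc μ → ∀ t s : ℝ, 0 ≤ t → 0 ≤ s → t + s ≤ T →
    S t (S s μ) = S (t + s) μ) ∧
  (∀ μ : Measure X, Pc μ → IsWeakSol V T (fun t => S t μ)) ∧
  ∃ C > (0:ℝ), ∀ R > (0:ℝ), ∃ CR > (0:ℝ), ∀ μ ν : Measure X, Pc μ → Pc ν →
    SuppIn μ (closedBall 0 R) → SuppIn ν (closedBall 0 R) →
    ∀ t ∈ Icc (0:ℝ) T, ∀ s ∈ Icc (0:ℝ) T,
      SuppIn (S t μ) (closedBall 0 (Real.exp (C * t) * (R + 1))) ∧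
      Wass (S t μ) (S t ν) ≤ Real.exp (CR * t) * Wass μ ν ∧
      Wass (S t μ) (S s μ) ≤ CR * |t - s|

/-- The PVF associated to a vector field `v`: `V^v[μ] = (id, v)#μ = μ ⊗ δ_{v(x)}`. -/
def Vvec (v : X → X) : PVF X := fun μ => μ.map (fun x => (x, v x))

end MDE
open scoped Classical
namespace MDE

/-- Discretization of a point of ℝⁿ onto the grid `hℤⁿ` (componentwise floor). -/
def gridFloor {n : ℕ} (h : ℝ) (x : Euc n) : Euc n :=
  WithLp.toLp 2 (fun i => h * (⌊x i / h⌋ : ℝ))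

/-- Discretization of a real number onto the grid `hℤ`. -/
def gridFloorR (h : ℝ) (x : ℝ) : ℝ := h * (⌊x / h⌋ : ℝ)

/-- Lattice Approximate Solution: `μ 0` is the space discretization of `μ₀` with mesh `1/N²`,
and `μ (ℓ+1)` is obtained by discretizing the velocities of `V[μ ℓ]` with mesh `1/N` and
moving the Dirac masses for a time step `1/N`. -/
def IsLAS {n : ℕ} (V : Measure (Euc n) → Measure (Euc n × Euc n)) (N : ℕ)
    (μ₀ : Measure (Euc n)) (μ : ℕ → Measure (Euc n)) : Prop :=
  μ 0 = μ₀.map (gridFloor (1 / (N : ℝ) ^ 2)) ∧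
  ∀ ℓ : ℕ, μ (ℓ + 1) =
    ((V (μ ℓ)).map (fun p => (p.1, gridFloor (1 / (N : ℝ)) p.2))).map
      (fun p => p.1 + (1 / (N : ℝ)) • p.2)

def IsLASR (V : Measure ℝ → Measure (ℝ × ℝ)) (N : ℕ)
    (μ₀ : Measure ℝ) (μ : ℕ → Measure ℝ) : Prop :=
  μ 0 = μ₀.map (gridFloorR (1 / (N : ℝ) ^ 2)) ∧
  ∀ ℓ : ℕ, μ (ℓ + 1) =
    ((V (μ ℓ)).map (fun p => (p.1, gridFloorR (1 / (N : ℝ)) p.2))).map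
      (fun p => p.1 + (1 / (N : ℝ)) * p.2)

/-- Fiber convolution of two measures on the tangent bundle with the same base marginal. -/
def fiberConv {n : ℕ} (W₁ W₂ : Measure (Euc n × Euc n)) : Measure (Euc n × Euc n) :=
  if h : IsFiniteMeasure W₁ ∧ IsFiniteMeasure W₂ then
    haveI := h.1
    haveI := h.2
    (W₁.map Prod.fst).bind (fun x =>
      ((W₁.condKernel x).prod (W₂.condKernel x)).map
        (fun p : Euc n × Euc n => (x, p.1 + p.2)))
  else 0

/-- The median of a probability measure on ℝ. -/
def medB (μ : Measure ℝ) : ℝ := sSup {x : ℝ | μ (Set.Iic x) ≤ 1/2}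

/-- The median-splitting PVF on ℝ: velocity `-1` left of the median, `+1` right of it,
and the atom at the median is split so that exactly half of the total mass moves left. -/
def medPVF : Measure ℝ → Measure (ℝ × ℝ) := fun μ =>
  (μ.restrict (Set.Iio (medB μ))).map (fun x => (x, (-1 : ℝ)))
  + (μ.restrict (Set.Ioi (medB μ))).map (fun x => (x, (1 : ℝ)))
  + (μ (Set.Iic (medB μ)) - 1/2) • Measure.dirac (medB μ, (1 : ℝ))
  + (1/2 - μ (Set.Iio (medB μ))) • Measure.dirac (medB μ, (-1 : ℝ))

end MDE

open MDE

section AuxLemmas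

variable {n : ℕ}

lemma aux_measurable_gridFloor (h : ℝ) : Measurable (gridFloor (n := n) h) := by
  show Measurable (fun x : Euc n => WithLp.toLp 2 (fun i => h * (⌊x i / h⌋ : ℝ)))
  apply (WithLp.measurable_toLp 2 (Fin n → ℝ)).comp
  apply measurable_pi_iff.2
  intro i
  have m1 : Measurable (fun x : Euc n => x i) :=
    (measurable_pi_apply i).comp (WithLp.measurable_ofLp 2 (Fin n → ℝ))
  exact (measurable_from_top.comp (m1.div_const h).floor : Measurable _).const_mul h

lemma aux_norm_le_sqrt_card {x : Euc n} {c : ℝ} (hc : 0 ≤ c) (hb : ∀ i, |x i| ≤ c) :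
    ‖x‖ ≤ Real.sqrt n * c := by
  rw [EuclideanSpace.norm_eq]
  calc Real.sqrt (∑ i, ‖x i‖ ^ 2) ≤ Real.sqrt (∑ _i : Fin n, c ^ 2) := by
        apply Real.sqrt_le_sqrt
        apply Finset.sum_le_sum
        intro i _
        have h2 : ‖x i‖ ≤ c := by rw [Real.norm_eq_abs]; exact hb i
        nlinarith [norm_nonneg (x i)]
    _ = Real.sqrt n * c := by
        rw [Finset.sum_const, Finset.card_univ, Fintype.card_fin]
        rw [nsmul_eq_mul, Real.sqrt_mul (by positivity), Real.sqrt_sq hc]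

lemma aux_gridFloor_err {h : ℝ} (hh : 0 < h) (x : Euc n) :
    ‖gridFloor h x - x‖ ≤ Real.sqrt n * h := by
  apply aux_norm_le_sqrt_card hh.le
  intro i
  rw [PiLp.sub_apply]
  show |h * (⌊x i / h⌋ : ℝ) - x i| ≤ h
  have h1 : ((⌊x i / h⌋ : ℤ) : ℝ) ≤ x i / h := Int.floor_le _
  have h2 : x i / h < ((⌊x i / h⌋ : ℤ) : ℝ) + 1 := Int.lt_floor_add_one _
  have hx : h * (x i / h) = x i := by field_simp
  rw [abs_le]
  constructor <;> nlinarith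

lemma aux_abs_coord_le_norm (x : Euc n) (k : Fin n) : |x k| ≤ ‖x‖ := by
  rw [← Real.sqrt_sq_eq_abs, EuclideanSpace.norm_eq]
  apply Real.sqrt_le_sqrt
  calc (x k) ^ 2 = ‖x k‖ ^ 2 := by rw [Real.norm_eq_abs, sq_abs]
    _ ≤ ∑ i, ‖x i‖ ^ 2 :=
        Finset.single_le_sum (f := fun i => ‖x i‖ ^ 2) (fun i _ => by positivity)
          (Finset.mem_univ k)

lemma aux_wass_nonneg {Y : Type*} [MeasurableSpace Y] [PseudoMetricSpace Y]
    (μ ν : Measure Y) : 0 ≤ Wass μ ν := by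
  apply Real.sInf_nonneg
  rintro r ⟨τ, -, rfl⟩
  exact integral_nonneg fun p => dist_nonneg

lemma aux_wass_le {Ω : Type*} [MeasurableSpace Ω] (P : Measure Ω) (G H : Ω → Euc n)
    (hG : Measurable G) (hH : Measurable H) :
    Wass (P.map G) (P.map H) ≤ ∫ ω, dist (G ω) (H ω) ∂P := by
  apply csInf_le
  · exact ⟨0, by rintro r ⟨τ, -, rfl⟩; exact integral_nonneg fun p => dist_nonneg⟩
  · refine ⟨P.map (fun ω => (G ω, H ω)), ⟨?_, ?_⟩, ?_⟩
    · rw [Measure.map_map measurable_fst (hG.prodMk hH)]; rfl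
    · rw [Measure.map_map measurable_snd (hG.prodMk hH)]; rfl
    · rw [integral_map (hG.prodMk hH).aemeasurable]
      exact continuous_dist.aestronglyMeasurable

lemma aux_integrable_of_ae_bound {α : Type*} [MeasurableSpace α] {μ : Measure α}
    [IsFiniteMeasure μ] {E : Type*} [NormedAddCommGroup E] {f : α → E}
    (hm : AEStronglyMeasurable f μ) {C : ℝ} (h : ∀ᵐ x ∂μ, ‖f x‖ ≤ C) : Integrable f μ :=
  Integrable.mono' (integrable_const C) hm h

lemma aux_integral_pi_prod {E : Type*} [MeasurableSpace E] (μ : Measure E)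
    [IsProbabilityMeasure μ] :
    ∀ {m : ℕ} (f : Fin m → E → ℝ),
      ∫ x : Fin m → E, ∏ i, f i (x i) ∂(Measure.pi fun _ => μ) = ∏ i, ∫ x, f i x ∂μ := by
  intro m
  induction m with
  | zero =>
      intro f
      simp [Measure.pi_empty_univ]
  | succ m ih =>
      intro f
      calc
        _ = ∫ x : E × (Fin m → E),
            f 0 x.1 * ∏ i : Fin m, f i.succ (x.2 i) ∂(μ.prod (Measure.pi fun _ => μ)) := by
          rw [← ((measurePreserving_piFinSuccAbove
            (fun _ : Fin (m+1) => μ) 0).symm).integral_comp']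
          congr 1 with x
          rw [Fin.prod_univ_succ]
          congr 1
        _ = (∫ x, f 0 x ∂μ) * ∏ i : Fin m, ∫ x, f i.succ x ∂μ := by
          rw [← ih, ← integral_prod_mul]
        _ = ∏ i, ∫ x, f i x ∂μ := by rw [Fin.prod_univ_succ]

lemma aux_ae_norm_le {μ : Measure (Euc n)} {R : ℝ}
    (hsupp : SuppIn μ (closedBall 0 R)) : ∀ᵐ w ∂μ, ‖w‖ ≤ R := by
  have h : {w : Euc n | ¬ ‖w‖ ≤ R} = (closedBall (0 : Euc n) R)ᶜ := by
    ext w; simp [mem_closedBall_zero_iff]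
  rw [ae_iff, h]
  exact hsupp

lemma aux_ae_pi_norm_le (Vbar : Measure (Euc n)) [IsProbabilityMeasure Vbar] {RV : ℝ}
    (hsupp : SuppIn Vbar (closedBall 0 RV)) (ℓ : ℕ) :
    ∀ᵐ v ∂(Measure.pi fun _ : Fin ℓ => Vbar), ∀ i, ‖v i‖ ≤ RV := by
  rw [ae_all_iff]
  intro i
  have hball : Vbar (closedBall (0 : Euc n) RV) = 1 :=
    (prob_compl_eq_zero_iff measurableSet_closedBall).1 hsupp
  have hsets : {v : Fin ℓ → Euc n | ¬ ‖v i‖ ≤ RV}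
      = (Set.pi univ fun j => if j = i then closedBall (0 : Euc n) RV else univ)ᶜ := by
    ext v
    simp only [mem_setOf_eq, mem_compl_iff, Set.mem_univ_pi]
    constructor
    · intro hv hall
      exact hv (mem_closedBall_zero_iff.1 (by simpa using hall i))
    · intro hv hi
      refine hv fun j => ?_
      by_cases hj : j = i
      · subst hj; simp [mem_closedBall_zero_iff.2 hi]
      · simp [hj]
  have hmeas : ∀ j : Fin ℓ, MeasurableSet
      (if j = i then closedBall (0 : Euc n) RV else (univ : Set (Euc n))) := by
    intro j
    by_cases hj : j = i
    · rw [if_pos hj]; exact measurableSet_closedBall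
    · rw [if_neg hj]; exact MeasurableSet.univ
  rw [ae_iff, hsets, measure_compl (MeasurableSet.univ_pi hmeas) (measure_ne_top _ _),
    Measure.pi_pi]
  have hprod : (∏ j : Fin ℓ, Vbar (if j = i then closedBall (0 : Euc n) RV else univ)) = 1 := by
    apply Finset.prod_eq_one
    intro j _
    by_cases hj : j = i
    · rw [if_pos hj, hball]
    · rw [if_neg hj, measure_univ]
  rw [hprod, measure_univ, tsub_self]

lemma aux_lln (Vbar : Measure (Euc n)) [IsProbabilityMeasure Vbar] {RV : ℝ}
    (hRV : 0 ≤ RV) (hsupp : SuppIn Vbar (closedBall 0 RV)) (ℓ : ℕ) :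
    ∫ v : Fin ℓ → Euc n, ‖∑ i, (v i - ∫ w, w ∂Vbar)‖ ∂(Measure.pi fun _ => Vbar)
      ≤ Real.sqrt ((ℓ : ℝ) * ∑ k, ∫ w, (w k - (∫ w, w ∂Vbar) k) ^ 2 ∂Vbar) := by
  classical
  set vb : Euc n := ∫ w, w ∂Vbar with hvbdef
  set P : Measure (Fin ℓ → Euc n) := Measure.pi fun _ => Vbar with hPdef
  haveI : IsProbabilityMeasure P := by rw [hPdef]; infer_instance
  set S : (Fin ℓ → Euc n) → Euc n := fun v => ∑ i, (v i - vb) with hSdef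
  have mcoord : ∀ k : Fin n, Measurable (fun w : Euc n => w k) := fun k =>
    (measurable_pi_apply k).comp (WithLp.measurable_ofLp 2 (Fin n → ℝ))
  have mS : Measurable S := by
    apply Finset.measurable_sum
    intro i _
    exact (measurable_pi_apply i).sub measurable_const
  -- a.e. bounds
  have haeV : ∀ᵐ w ∂Vbar, ‖w‖ ≤ RV := aux_ae_norm_le hsupp
  have hvbn : ‖vb‖ ≤ RV := by
    have := norm_integral_le_of_norm_le (integrable_const RV) haeV
    simpa using this
  have haeP : ∀ᵐ v ∂P, ∀ i, ‖v i‖ ≤ RV := aux_ae_pi_norm_le Vbar hsupp ℓ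
  set M : ℝ := (ℓ : ℝ) * (2 * RV) with hMdef
  have haeS : ∀ᵐ v ∂P, ‖S v‖ ≤ M := by
    filter_upwards [haeP] with v hv
    calc ‖S v‖ ≤ ∑ i, ‖v i - vb‖ := norm_sum_le _ _
      _ ≤ ∑ _i : Fin ℓ, (2 * RV) := by
          apply Finset.sum_le_sum
          intro i _
          calc ‖v i - vb‖ ≤ ‖v i‖ + ‖vb‖ := norm_sub_le _ _
            _ ≤ 2 * RV := by linarith [hv i, hvbn]
      _ = M := by rw [Finset.sum_const, Finset.card_univ, Fintype.card_fin, nsmul_eq_mul, hMdef]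
  have hM0 : 0 ≤ M := by positivity
  -- integrability of the identity and coordinates w.r.t. Vbar
  have hid_int : Integrable (fun w : Euc n => w) Vbar :=
    aux_integrable_of_ae_bound aestronglyMeasurable_id haeV
  have hmean : ∀ k : Fin n, ∫ w, w k ∂Vbar = vb k := by
    intro k
    have := (EuclideanSpace.proj (𝕜 := ℝ) k).integral_comp_comm hid_int
    simpa using this
  have hcoord_int : ∀ k : Fin n, Integrable (fun w : Euc n => w k - vb k) Vbar := by
    intro k
    have m1 : Measurable (fun w : Euc n => w k - vb k) := (mcoord k).sub measurable_const
    apply aux_integrable_of_ae_bound (f := fun w : Euc n => w k - vb k)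
      m1.aestronglyMeasurable (C := 2 * RV)
    filter_upwards [haeV] with w hw
    rw [Real.norm_eq_abs]
    calc |w k - vb k| ≤ |w k| + |vb k| := abs_sub _ _
      _ ≤ ‖w‖ + ‖vb‖ := add_le_add (aux_abs_coord_le_norm w k) (aux_abs_coord_le_norm vb k)
      _ ≤ 2 * RV := by linarith
  have hgk0 : ∀ k : Fin n, ∫ w, (w k - vb k) ∂Vbar = 0 := by
    intro k
    have h1 : Integrable (fun w : Euc n => w k) Vbar := by
      apply aux_integrable_of_ae_bound (f := fun w : Euc n => w k)
        (mcoord k).aestronglyMeasurable (C := RV)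
      filter_upwards [haeV] with w hw
      exact le_trans (by rw [Real.norm_eq_abs]; exact aux_abs_coord_le_norm w k) hw
    rw [integral_sub h1 (integrable_const _), hmean k, integral_const]
    simp
  -- the second moment of one factor
  set σk : Fin n → ℝ := fun k => ∫ w, (w k - vb k) ^ 2 ∂Vbar with hσkdef
  -- key term computation
  have hterm : ∀ (k : Fin n) (i j : Fin ℓ),
      ∫ v, (v i k - vb k) * (v j k - vb k) ∂P = if i = j then σk k else 0 := by
    intro k i j
    by_cases hij : i = j
    · subst hij
      rw [if_pos rfl]
      set f : Fin ℓ → Euc n → ℝ := fun m => if m = i then (fun w => (w k - vb k) ^ 2)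
        else fun _ => 1 with hfdef
      have h1 : ∀ v : Fin ℓ → Euc n, ∏ m, f m (v m) = (v i k - vb k) ^ 2 := by
        intro v
        rw [Finset.prod_eq_single i]
        · simp [hfdef]
        · intro m _ hm; simp [hfdef, hm]
        · intro hm; exact absurd (Finset.mem_univ i) hm
      have h2 : (∏ m : Fin ℓ, ∫ w, f m w ∂Vbar) = σk k := by
        rw [Finset.prod_eq_single i]
        · simp [hfdef, hσkdef]
        · intro m _ hm; simp [hfdef, hm]
        · intro hm; exact absurd (Finset.mem_univ i) hm
      calc ∫ v, (v i k - vb k) * (v i k - vb k) ∂P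
          = ∫ v, ∏ m, f m (v m) ∂P := by
            apply integral_congr_ae
            filter_upwards with v
            rw [h1 v, sq]
        _ = ∏ m : Fin ℓ, ∫ w, f m w ∂Vbar := aux_integral_pi_prod Vbar f
        _ = σk k := h2
    · rw [if_neg hij]
      set f : Fin ℓ → Euc n → ℝ := fun m =>
        if m = i then (fun w => w k - vb k)
        else if m = j then (fun w => w k - vb k) else fun _ => 1 with hfdef
      have h1 : ∀ v : Fin ℓ → Euc n, ∏ m, f m (v m)
          = (v i k - vb k) * (v j k - vb k) := by
        intro v
        have hsub : ({i, j} : Finset (Fin ℓ)) ⊆ Finset.univ := Finset.subset_univ _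
        have hout : ∀ m ∈ Finset.univ, m ∉ ({i, j} : Finset (Fin ℓ)) → f m (v m) = 1 := by
          intro m _ hm
          simp only [Finset.mem_insert, Finset.mem_singleton, not_or] at hm
          simp [hfdef, hm.1, hm.2]
        rw [← Finset.prod_subset hsub hout, Finset.prod_insert (by simp [hij]),
          Finset.prod_singleton]
        simp [hfdef, hij, Ne.symm hij]
      have h2 : (∏ m : Fin ℓ, ∫ w, f m w ∂Vbar) = 0 := by
        apply Finset.prod_eq_zero (Finset.mem_univ i)
        simp [hfdef, hgk0 k]
      calc ∫ v, (v i k - vb k) * (v j k - vb k) ∂P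
          = ∫ v, ∏ m, f m (v m) ∂P := by
            apply integral_congr_ae
            filter_upwards with v
            rw [h1 v]
        _ = ∏ m : Fin ℓ, ∫ w, f m w ∂Vbar := aux_integral_pi_prod Vbar f
        _ = 0 := h2
  -- coordinates of S
  have hScoord : ∀ (v : Fin ℓ → Euc n) (k : Fin n), S v k = ∑ i, (v i k - vb k) := by
    intro v k
    simp only [hSdef, WithLp.ofLp_sum, Finset.sum_apply, PiLp.sub_apply]
  have hnormsq : ∀ v : Fin ℓ → Euc n, ‖S v‖ ^ 2 = ∑ k, (∑ i, (v i k - vb k)) ^ 2 := by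
    intro v
    rw [EuclideanSpace.norm_eq, Real.sq_sqrt (by positivity)]
    apply Finset.sum_congr rfl
    intro k _
    rw [Real.norm_eq_abs, sq_abs, hScoord v k]
  -- integrability facts on P
  have haeSum : ∀ (k : Fin n), ∀ᵐ v ∂P, |∑ i, (v i k - vb k)| ≤ M := by
    intro k
    filter_upwards [haeP] with v hv
    calc |∑ i, (v i k - vb k)| ≤ ∑ i, |v i k - vb k| := Finset.abs_sum_le_sum_abs _ _
      _ ≤ ∑ _i : Fin ℓ, (2 * RV) := by
          apply Finset.sum_le_sum
          intro i _
          calc |v i k - vb k| ≤ |v i k| + |vb k| := abs_sub _ _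
            _ ≤ ‖v i‖ + ‖vb‖ := add_le_add (aux_abs_coord_le_norm _ k) (aux_abs_coord_le_norm _ k)
            _ ≤ 2 * RV := by linarith [hv i]
      _ = M := by rw [Finset.sum_const, Finset.card_univ, Fintype.card_fin, nsmul_eq_mul, hMdef]
  have msum : ∀ k : Fin n, Measurable (fun v : Fin ℓ → Euc n => ∑ i, (v i k - vb k)) := by
    intro k
    apply Finset.measurable_sum
    intro i _
    exact ((mcoord k).comp (measurable_pi_apply i)).sub measurable_const
  have hintsq : ∀ k : Fin n,
      Integrable (fun v : Fin ℓ → Euc n => (∑ i, (v i k - vb k)) ^ 2) P := by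
    intro k
    apply aux_integrable_of_ae_bound ((msum k).pow_const 2).aestronglyMeasurable (C := M ^ 2)
    filter_upwards [haeSum k] with v hv
    rw [Real.norm_eq_abs, abs_pow]
    exact pow_le_pow_left₀ (abs_nonneg _) hv 2
  have hintprod : ∀ (k : Fin n) (i j : Fin ℓ),
      Integrable (fun v : Fin ℓ → Euc n => (v i k - vb k) * (v j k - vb k)) P := by
    intro k i j
    have mik : Measurable (fun v : Fin ℓ → Euc n => v i k - vb k) :=
      ((mcoord k).comp (measurable_pi_apply i)).sub measurable_const
    have mjk : Measurable (fun v : Fin ℓ → Euc n => v j k - vb k) :=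
      ((mcoord k).comp (measurable_pi_apply j)).sub measurable_const
    apply aux_integrable_of_ae_bound (mik.mul mjk).aestronglyMeasurable (C := (2*RV) * (2*RV))
    filter_upwards [haeP] with v hv
    rw [Real.norm_eq_abs, Pi.mul_apply, abs_mul]
    have hb : ∀ m : Fin ℓ, |v m k - vb k| ≤ 2 * RV := by
      intro m
      calc |v m k - vb k| ≤ |v m k| + |vb k| := abs_sub _ _
        _ ≤ ‖v m‖ + ‖vb‖ := add_le_add (aux_abs_coord_le_norm _ k) (aux_abs_coord_le_norm _ k)
        _ ≤ 2 * RV := by linarith [hv m]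
    exact mul_le_mul (hb i) (hb j) (abs_nonneg _) (by linarith)
  -- second moment of S
  have hB : ∫ v, ‖S v‖ ^ 2 ∂P = (ℓ : ℝ) * ∑ k, σk k := by
    have e1 : ∫ v, ‖S v‖ ^ 2 ∂P = ∫ v, ∑ k, (∑ i, (v i k - vb k)) ^ 2 ∂P := by
      apply integral_congr_ae
      filter_upwards with v
      exact hnormsq v
    rw [e1, integral_finset_sum _ (fun k _ => hintsq k)]
    have e2 : ∀ k : Fin n, ∫ v, (∑ i, (v i k - vb k)) ^ 2 ∂P = (ℓ : ℝ) * σk k := by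
      intro k
      have e3 : ∀ v : Fin ℓ → Euc n, (∑ i, (v i k - vb k)) ^ 2
          = ∑ i, ∑ j, (v i k - vb k) * (v j k - vb k) := by
        intro v
        rw [sq, Finset.sum_mul_sum]
      calc ∫ v, (∑ i, (v i k - vb k)) ^ 2 ∂P
          = ∫ v, ∑ i, ∑ j, (v i k - vb k) * (v j k - vb k) ∂P := by
            apply integral_congr_ae
            filter_upwards with v
            exact e3 v
        _ = ∑ i, ∑ j, ∫ v, (v i k - vb k) * (v j k - vb k) ∂P := by
            rw [integral_finset_sum _ (fun i _ => integrable_finset_sum _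
              (fun j _ => hintprod k i j))]
            exact Finset.sum_congr rfl fun i _ =>
              integral_finset_sum _ (fun j _ => hintprod k i j)
        _ = ∑ i : Fin ℓ, σk k := by
            apply Finset.sum_congr rfl
            intro i _
            rw [Finset.sum_congr rfl (fun j _ => hterm k i j)]
            simp
        _ = (ℓ : ℝ) * σk k := by
            rw [Finset.sum_const, Finset.card_univ, Fintype.card_fin, nsmul_eq_mul]
    rw [Finset.sum_congr rfl (fun k _ => e2 k), ← Finset.mul_sum]
  -- Cauchy-Schwarz step
  have hintS : Integrable (fun v => ‖S v‖) P := by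
    apply aux_integrable_of_ae_bound mS.norm.aestronglyMeasurable (C := M)
    filter_upwards [haeS] with v hv
    rwa [norm_norm]
  have hintS2 : Integrable (fun v => ‖S v‖ ^ 2) P := by
    apply aux_integrable_of_ae_bound (mS.norm.pow_const 2).aestronglyMeasurable (C := M ^ 2)
    filter_upwards [haeS] with v hv
    rw [Real.norm_eq_abs, abs_of_nonneg (by positivity)]
    exact pow_le_pow_left₀ (norm_nonneg _) hv 2
  set A : ℝ := ∫ v, ‖S v‖ ∂P with hAdef
  have hA0 : 0 ≤ A := integral_nonneg fun v => norm_nonneg _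
  have hexp : ∫ v, (‖S v‖ - A) ^ 2 ∂P = (ℓ : ℝ) * ∑ k, σk k - A ^ 2 := by
    have e : (fun v => (‖S v‖ - A) ^ 2)
        = fun v => (‖S v‖ ^ 2 - (2 * A) * ‖S v‖) + A ^ 2 := by
      funext v; ring
    have h12 : Integrable (fun v => ‖S v‖ ^ 2 - (2 * A) * ‖S v‖) P :=
      hintS2.sub (hintS.const_mul (2 * A))
    rw [e, integral_add h12 (integrable_const _),
      integral_sub hintS2 (hintS.const_mul (2 * A)), integral_const_mul, hB, integral_const]
    simp only [measure_univ, ENNReal.toReal_one, probReal_univ, smul_eq_mul, one_mul]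
    rw [← hAdef]
    ring
  have hvar : 0 ≤ ∫ v, (‖S v‖ - A) ^ 2 ∂P := integral_nonneg fun v => by positivity
  have hA2 : A ^ 2 ≤ (ℓ : ℝ) * ∑ k, σk k := by
    rw [hexp] at hvar; linarith
  have := Real.sqrt_le_sqrt hA2
  rwa [Real.sqrt_sq hA0] at this

lemma aux_las_form (N : ℕ) (Vbar : Measure (Euc n)) [IsProbabilityMeasure Vbar]
    (μ₀ : Measure (Euc n)) [IsProbabilityMeasure μ₀]
    (V : Measure (Euc n) → Measure (Euc n × Euc n))
    (hVdef : ∀ μ : Measure (Euc n), V μ = μ.prod Vbar)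
    (μ : ℕ → Measure (Euc n)) (hL : IsLAS V N μ₀ μ) : ∀ ℓ : ℕ,
    μ ℓ = (μ₀.prod (Measure.pi fun _ : Fin ℓ => Vbar)).map
      (fun ω => gridFloor (1 / (N : ℝ) ^ 2) ω.1
        + (1 / (N : ℝ)) • ∑ i, gridFloor (1 / (N : ℝ)) (ω.2 i)) := by
  set a : ℝ := 1 / (N : ℝ) ^ 2 with hadef
  set h : ℝ := 1 / (N : ℝ) with hhdef
  intro ℓ
  induction ℓ with
  | zero =>
      rw [hL.1]
      have he : (fun ω : Euc n × (Fin 0 → Euc n) =>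
          gridFloor a ω.1 + h • ∑ i, gridFloor h (ω.2 i)) = (gridFloor a) ∘ Prod.fst := by
        funext ω
        simp
      rw [he, ← Measure.map_map (aux_measurable_gridFloor a) measurable_fst,
        Measure.map_fst_prod]
      simp only [measure_univ, one_smul]
      rfl
  | succ ℓ ih =>
      have mgF : ∀ c : ℝ, Measurable (gridFloor (n := n) c) := aux_measurable_gridFloor
      set Pl : Measure (Euc n × (Fin ℓ → Euc n)) :=
        μ₀.prod (Measure.pi fun _ : Fin ℓ => Vbar) with hPldef
      set G : Euc n × (Fin ℓ → Euc n) → Euc n :=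
        fun ω => gridFloor a ω.1 + h • ∑ i, gridFloor h (ω.2 i) with hGdef
      set G' : Euc n × (Fin (ℓ+1) → Euc n) → Euc n :=
        fun ω => gridFloor a ω.1 + h • ∑ i, gridFloor h (ω.2 i) with hG'def
      have mG : Measurable G := by
        apply Measurable.add
        · exact (mgF a).comp measurable_fst
        · apply Measurable.fun_const_smul
          apply Finset.measurable_sum
          intro i _
          exact (mgF h).comp ((measurable_pi_apply i).comp measurable_snd)
      have mG' : Measurable G' := by
        apply Measurable.add
        · exact (mgF a).comp measurable_fst
        · apply Measurable.fun_const_smul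
          apply Finset.measurable_sum
          intro i _
          exact (mgF h).comp ((measurable_pi_apply i).comp measurable_snd)
      have m1 : Measurable (fun p : Euc n × Euc n => (p.1, gridFloor h p.2)) :=
        measurable_fst.prodMk ((mgF h).comp measurable_snd)
      have m2 : Measurable (fun p : Euc n × Euc n => p.1 + h • p.2) :=
        measurable_fst.add (measurable_snd.const_smul h)
      rw [hL.2 ℓ, hVdef, Measure.map_map m2 m1, ih]
      have mpG : MeasurePreserving G Pl (Pl.map G) := ⟨mG, rfl⟩
      have mp1 : MeasurePreserving (Prod.map G (id : Euc n → Euc n)) (Pl.prod Vbar)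
          ((Pl.map G).prod Vbar) := mpG.prod (MeasurePreserving.id Vbar)
      rw [← mp1.map_eq, Measure.map_map (m2.comp m1) (mG.prodMap measurable_id)]
      -- build the measure-preserving reindexing map Φ
      set e := MeasurableEquiv.piFinSuccAbove (fun _ : Fin (ℓ+1) => Euc n) (Fin.last ℓ) with hedef
      have mp_e : MeasurePreserving e (Measure.pi fun _ : Fin (ℓ+1) => Vbar)
          (Vbar.prod (Measure.pi fun _ : Fin ℓ => Vbar)) :=
        measurePreserving_piFinSuccAbove (fun _ : Fin (ℓ+1) => Vbar) (Fin.last ℓ)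
      have mp_esymm : MeasurePreserving e.symm
          (Vbar.prod (Measure.pi fun _ : Fin ℓ => Vbar))
          (Measure.pi fun _ : Fin (ℓ+1) => Vbar) := mp_e.symm e
      have mp_swap : MeasurePreserving (Prod.swap :
            (Fin ℓ → Euc n) × Euc n → Euc n × (Fin ℓ → Euc n))
          ((Measure.pi fun _ : Fin ℓ => Vbar).prod Vbar)
          (Vbar.prod (Measure.pi fun _ : Fin ℓ => Vbar)) :=
        Measure.measurePreserving_swap
      have mpΦ : MeasurePreserving
          ((Prod.map (id : Euc n → Euc n) (e.symm ∘ Prod.swap)) ∘ MeasurableEquiv.prodAssoc)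
          (Pl.prod Vbar) (μ₀.prod (Measure.pi fun _ : Fin (ℓ+1) => Vbar)) := by
        apply MeasurePreserving.comp
        · exact (MeasurePreserving.id μ₀).prod (mp_esymm.comp mp_swap)
        · exact measurePreserving_prodAssoc μ₀ _ Vbar
      have mΦ : Measurable
          ((Prod.map (id : Euc n → Euc n) (e.symm ∘ Prod.swap)) ∘ MeasurableEquiv.prodAssoc) :=
        (measurable_id.prodMap (e.symm.measurable.comp measurable_swap)).comp
          MeasurableEquiv.prodAssoc.measurable
      rw [← mpΦ.map_eq, Measure.map_map mG' mΦ]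
      congr 1
      funext p
      obtain ⟨⟨x, v⟩, y⟩ := p
      show G (x, v) + h • gridFloor h y
        = G' (x, (Fin.last ℓ).insertNth y v)
      rw [hGdef, hG'def]
      simp only
      rw [Fin.sum_univ_succAbove
        (fun i : Fin (ℓ+1) => gridFloor h ((Fin.last ℓ).insertNth (α := fun _ => Euc n) y v i))
        (Fin.last ℓ)]
      simp only [Fin.insertNth_apply_same, Fin.insertNth_apply_succAbove]
      rw [smul_add]
      abel

end AuxLemmas

set_option maxHeartbeats 1000000 in
/-- Proposition 7.1: a measure-independent PVF `V[μ] = μ ⊗ V̄` produces,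
as limit of Lattice Approximate Solutions, the constant translation of `μ₀` at the mean
velocity `v̄ = ∫ v dV̄`: no diffusion occurs. -/
theorem constant_pvf_translation (n : ℕ) (T : ℝ) (hT : 0 < T)
    (Vbar : Measure (Euc n)) (hVbar : IsProbabilityMeasure Vbar)
    (RV : ℝ) (hRV : 0 ≤ RV) (hVsupp : SuppIn Vbar (closedBall 0 RV))
    (V : PVF (Euc n)) (hVdef : ∀ μ : Measure (Euc n), V μ = μ.prod Vbar)
    (μ₀ : Measure (Euc n)) (h₀ : Pc μ₀)
    (μseq : ℕ → ℕ → Measure (Euc n)) (hLAS : ∀ N : ℕ, IsLAS V N μ₀ (μseq N)) :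
    ∀ t ∈ Icc (0:ℝ) T,
      Tendsto (fun N : ℕ =>
          Wass (μseq N ⌊(N : ℝ) * t⌋₊)
            (μ₀.map (fun x => x + t • (∫ v, v ∂Vbar))))
        atTop (nhds 0) := by
  haveI : IsProbabilityMeasure Vbar := hVbar
  haveI : IsProbabilityMeasure μ₀ := h₀.1
  intro t ht
  obtain ⟨ht0, htT⟩ := ht
  set vb : Euc n := ∫ v, v ∂Vbar with hvbdef
  set σ2 : ℝ := ∑ k, ∫ w, (w k - vb k) ^ 2 ∂Vbar with hσ2def
  have hσ2 : 0 ≤ σ2 :=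
    Finset.sum_nonneg fun k _ => integral_nonneg fun w => by positivity
  set sn : ℝ := Real.sqrt n with hsndef
  have hsn : 0 ≤ sn := Real.sqrt_nonneg _
  set bound : ℕ → ℝ := fun N => sn * ((1/(N:ℝ)) * (1/(N:ℝ))) + sn * t * (1/(N:ℝ))
    + ‖vb‖ * (1/(N:ℝ)) + Real.sqrt (t * σ2 * (1/(N:ℝ))) with hbdef
  have h1 : Tendsto (fun N : ℕ => 1/(N:ℝ)) atTop (𝓝 0) :=
    tendsto_one_div_atTop_nhds_zero_nat
  have hb0 : Tendsto bound atTop (𝓝 0) := by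
    have t1 := (h1.mul h1).const_mul sn
    have t2 := h1.const_mul (sn * t)
    have t3 := h1.const_mul ‖vb‖
    have t4 : Tendsto (fun N : ℕ => Real.sqrt (t * σ2 * (1/(N:ℝ)))) atTop
        (𝓝 (Real.sqrt (t * σ2 * 0))) :=
      (Real.continuous_sqrt.tendsto _).comp (h1.const_mul (t * σ2))
    have := ((t1.add t2).add t3).add t4
    simpa [hbdef, mul_comm] using this
  apply squeeze_zero' (Eventually.of_forall fun N => aux_wass_nonneg _ _) _ hb0
  filter_upwards [eventually_ge_atTop 1] with N hN
  have hNpos : (0:ℝ) < N := by exact_mod_cast Nat.pos_of_ne_zero (by omega)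
  set ℓ : ℕ := ⌊(N : ℝ) * t⌋₊ with hℓdef
  set h : ℝ := 1/(N:ℝ) with hhdef
  have hh : 0 < h := by positivity
  have hN1 : h * N = 1 := by rw [hhdef]; field_simp
  set a : ℝ := 1/(N:ℝ)^2 with hadef
  have ha : 0 < a := by positivity
  have hah : a = h * h := by rw [hadef, hhdef]; field_simp
  have hℓle : (ℓ:ℝ) ≤ (N:ℝ) * t := Nat.floor_le (by positivity)
  have hℓgt : (N:ℝ) * t < ℓ + 1 := Nat.lt_floor_add_one _
  have hℓh : (ℓ:ℝ) * h ≤ t := by nlinarith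
  have habs : |h * ℓ - t| ≤ h := by
    rw [abs_le]
    constructor <;> nlinarith
  set P : Measure (Euc n × (Fin ℓ → Euc n)) :=
    μ₀.prod (Measure.pi fun _ : Fin ℓ => Vbar) with hPdef
  haveI : IsProbabilityMeasure P := by rw [hPdef]; infer_instance
  set G : Euc n × (Fin ℓ → Euc n) → Euc n :=
    fun ω => gridFloor a ω.1 + h • ∑ i, gridFloor h (ω.2 i) with hGdef
  set H : Euc n × (Fin ℓ → Euc n) → Euc n := fun ω => ω.1 + t • vb with hHdef
  have mG : Measurable G := by
    apply Measurable.add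
    · exact (aux_measurable_gridFloor a).comp measurable_fst
    · apply Measurable.fun_const_smul
      apply Finset.measurable_sum
      intro i _
      exact (aux_measurable_gridFloor h).comp ((measurable_pi_apply i).comp measurable_snd)
  have mH : Measurable H := measurable_fst.add_const _
  have hform : μseq N ℓ = P.map G := by
    have := aux_las_form N Vbar μ₀ V hVdef (μseq N) (hLAS N) ℓ
    rw [this]
  have hmapH : P.map H = μ₀.map (fun x => x + t • vb) := by
    have e1 : P.map H = (P.map Prod.fst).map (fun x => x + t • vb) :=
      (Measure.map_map (measurable_id.add_const _) measurable_fst).symm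
    rw [e1, Measure.map_fst_prod, measure_univ, one_smul]
  rw [hform, ← hmapH]
  refine le_trans (aux_wass_le P G H mG mH) ?_
  set c1 : ℝ := sn * a + sn * t * h + ‖vb‖ * h with hc1def
  -- pointwise bound
  have hpt : ∀ ω : Euc n × (Fin ℓ → Euc n),
      dist (G ω) (H ω) ≤ c1 + h * ‖∑ i, (ω.2 i - vb)‖ := by
    rintro ⟨x, v⟩
    rw [dist_eq_norm]
    have e1 : (∑ i, (gridFloor h (v i) - v i))
        = (∑ i, gridFloor h (v i)) - ∑ i, v i := Finset.sum_sub_distrib ..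
    have e2 : (∑ i, (v i - vb)) = (∑ i, v i) - (ℓ:ℝ) • vb := by
      rw [Finset.sum_sub_distrib, Finset.sum_const, Finset.card_univ, Fintype.card_fin]
      congr 1
      rw [← Nat.cast_smul_eq_nsmul ℝ]
    have hid : G (x, v) - H (x, v)
        = (gridFloor a x - x) + (h • ∑ i, (gridFloor h (v i) - v i))
          + (h • ∑ i, (v i - vb)) + (h * ℓ - t) • vb := by
      rw [e1, e2, hGdef, hHdef]
      simp only
      module
    rw [hid]
    have b1 : ‖gridFloor a x - x‖ ≤ sn * a := aux_gridFloor_err ha x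
    have b2 : ‖h • ∑ i, (gridFloor h (v i) - v i)‖ ≤ sn * t * h := by
      rw [norm_smul, Real.norm_eq_abs, abs_of_pos hh]
      have : ‖∑ i, (gridFloor h (v i) - v i)‖ ≤ (ℓ:ℝ) * (sn * h) := by
        calc ‖∑ i, (gridFloor h (v i) - v i)‖ ≤ ∑ i, ‖gridFloor h (v i) - v i‖ :=
              norm_sum_le _ _
          _ ≤ ∑ _i : Fin ℓ, sn * h := Finset.sum_le_sum fun i _ => aux_gridFloor_err hh (v i)
          _ = (ℓ:ℝ) * (sn * h) := by
              rw [Finset.sum_const, Finset.card_univ, Fintype.card_fin, nsmul_eq_mul]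
      nlinarith [mul_le_mul_of_nonneg_left this hh.le,
        mul_le_mul_of_nonneg_left hℓh (mul_nonneg hsn hh.le)]
    have b3 : ‖h • ∑ i, (v i - vb)‖ = h * ‖∑ i, (v i - vb)‖ := by
      rw [norm_smul, Real.norm_eq_abs, abs_of_pos hh]
    have b4 : ‖(h * ℓ - t) • vb‖ ≤ ‖vb‖ * h := by
      rw [norm_smul, Real.norm_eq_abs]
      calc |h * ℓ - t| * ‖vb‖ ≤ h * ‖vb‖ :=
            mul_le_mul_of_nonneg_right habs (norm_nonneg _)
        _ = ‖vb‖ * h := mul_comm _ _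
    calc ‖(gridFloor a x - x) + (h • ∑ i, (gridFloor h (v i) - v i))
          + (h • ∑ i, (v i - vb)) + (h * ℓ - t) • vb‖
        ≤ ‖(gridFloor a x - x) + (h • ∑ i, (gridFloor h (v i) - v i))
          + (h • ∑ i, (v i - vb))‖ + ‖(h * ℓ - t) • vb‖ := norm_add_le _ _
      _ ≤ (‖(gridFloor a x - x) + (h • ∑ i, (gridFloor h (v i) - v i))‖
          + ‖h • ∑ i, (v i - vb)‖) + ‖(h * ℓ - t) • vb‖ := by
          gcongr
          exact norm_add_le _ _
      _ ≤ ((‖gridFloor a x - x‖ + ‖h • ∑ i, (gridFloor h (v i) - v i)‖)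
          + ‖h • ∑ i, (v i - vb)‖) + ‖(h * ℓ - t) • vb‖ := by
          gcongr
          exact norm_add_le _ _
      _ ≤ c1 + h * ‖∑ i, (v i - vb)‖ := by
          rw [b3, hc1def]
          linarith
  -- a.e. bound for the fluctuation term on P
  set M : ℝ := (ℓ:ℝ) * (2 * RV) with hMdef
  have haeV : ∀ᵐ w ∂Vbar, ‖w‖ ≤ RV := aux_ae_norm_le hVsupp
  have hvbn : ‖vb‖ ≤ RV := by
    have := norm_integral_le_of_norm_le (integrable_const RV) haeV
    simpa using this
  have haeSpi : ∀ᵐ v ∂(Measure.pi fun _ : Fin ℓ => Vbar), ‖∑ i, (v i - vb)‖ ≤ M := by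
    filter_upwards [aux_ae_pi_norm_le Vbar hVsupp ℓ] with v hv
    calc ‖∑ i, (v i - vb)‖ ≤ ∑ i, ‖v i - vb‖ := norm_sum_le _ _
      _ ≤ ∑ _i : Fin ℓ, (2 * RV) := Finset.sum_le_sum fun i _ => by
          calc ‖v i - vb‖ ≤ ‖v i‖ + ‖vb‖ := norm_sub_le _ _
            _ ≤ 2 * RV := by linarith [hv i]
      _ = M := by rw [Finset.sum_const, Finset.card_univ, Fintype.card_fin, nsmul_eq_mul, hMdef]
  have mnorm : Measurable (fun v : Fin ℓ → Euc n => ‖∑ i, (v i - vb)‖) :=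
    (Finset.measurable_sum _ fun i _ => (measurable_pi_apply i).sub measurable_const).norm
  have hsnd : P.map Prod.snd = (Measure.pi fun _ : Fin ℓ => Vbar) := by
    rw [hPdef, Measure.map_snd_prod]
    simp
  have haeSP : ∀ᵐ ω ∂P, ‖∑ i, (ω.2 i - vb)‖ ≤ M := by
    apply ae_iff.2
    have hset : {ω : Euc n × (Fin ℓ → Euc n) | ¬ ‖∑ i, (ω.2 i - vb)‖ ≤ M}
        = Prod.snd ⁻¹' {v : Fin ℓ → Euc n | ¬ ‖∑ i, (v i - vb)‖ ≤ M} := rfl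
    have hms : MeasurableSet {v : Fin ℓ → Euc n | ¬ ‖∑ i, (v i - vb)‖ ≤ M} :=
      (measurableSet_le mnorm measurable_const).compl
    rw [hset, ← Measure.map_apply measurable_snd hms, hsnd]
    exact ae_iff.1 haeSpi
  have hSint : Integrable (fun ω : Euc n × (Fin ℓ → Euc n) => ‖∑ i, (ω.2 i - vb)‖) P := by
    apply aux_integrable_of_ae_bound
      (f := fun ω : Euc n × (Fin ℓ → Euc n) => ‖∑ i, (ω.2 i - vb)‖)
      ((mnorm.comp measurable_snd).aestronglyMeasurable) (C := M)
    filter_upwards [haeSP] with ω hω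
    rwa [norm_norm]
  have hgint : Integrable (fun ω : Euc n × (Fin ℓ → Euc n)
      => c1 + h * ‖∑ i, (ω.2 i - vb)‖) P :=
    (integrable_const c1).add (hSint.const_mul h)
  -- integral bound
  calc ∫ ω, dist (G ω) (H ω) ∂P
      ≤ ∫ ω, (c1 + h * ‖∑ i, (ω.2 i - vb)‖) ∂P := by
        apply integral_mono_of_nonneg (Eventually.of_forall fun ω => dist_nonneg) hgint
        exact Eventually.of_forall hpt
    _ = c1 + h * ∫ ω, ‖∑ i, (ω.2 i - vb)‖ ∂P := by
        rw [integral_add (integrable_const c1) (hSint.const_mul h), integral_const,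
          integral_const_mul]
        simp
    _ = c1 + h * ∫ v, ‖∑ i, (v i - vb)‖ ∂(Measure.pi fun _ : Fin ℓ => Vbar) := by
        congr 1
        rw [← hsnd, integral_map measurable_snd.aemeasurable mnorm.aestronglyMeasurable]
    _ ≤ c1 + h * Real.sqrt ((ℓ:ℝ) * σ2) := by
        have h2 := aux_lln Vbar hRV hVsupp ℓ
        rw [← hvbdef, ← hσ2def] at h2
        have h3 := mul_le_mul_of_nonneg_left h2 hh.le
        linarith
    _ ≤ bound N := by
        have hs : h * Real.sqrt ((ℓ:ℝ) * σ2) ≤ Real.sqrt (t * σ2 * h) := by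
          have e1 : Real.sqrt (h * h * ((ℓ:ℝ) * σ2)) = h * Real.sqrt ((ℓ:ℝ) * σ2) := by
            rw [Real.sqrt_mul (mul_self_nonneg h), Real.sqrt_mul_self hh.le]
          rw [← e1]
          apply Real.sqrt_le_sqrt
          nlinarith [mul_le_mul_of_nonneg_left hℓh (mul_nonneg hh.le hσ2)]
        rw [hbdef, hc1def]
        simp only
        rw [hah, ← hhdef]
        linarith [hs]


end
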